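/- arXiv:1905.11048 — 4 statements merged into one kernel-verified Lean document; each statement's English description precedes it below -/
import Mathlib

section
/- Let 0 < a_- < 1 < b_-, 0 < a_+ < 1 < b_+, and let p_-, p_+ > 0 with p_- + p_+ = 1. If (a_- + a_+ - 1)/(a_- a_+) = (b_- + b_+ - 1)/(b_- b_+) and p_- /a_- + p_+/b_+ = 1, then p_- /b_- + p_+/a_+ = 1. Conversely, if p_- /a_- + p_+/b_+ = 1 and p_- /b_- + p_+/a_+ = 1, then (a_- + a_+ - 1)/(a_- a_+) = (b_- + b_+ - 1)/(b_- b_+). -/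
theorem stmt3 (am bm ap bp pm pp : ℝ) (h1 : 0 < am) (h2 : am < 1) (h3 : 1 < bm)
    (h4 : 0 < ap) (h5 : ap < 1) (h6 : 1 < bp)
    (hpm : 0 < pm) (hpp : 0 < pp) (hsum : pm + pp = 1) :
    ((am + ap - 1) / (am * ap) = (bm + bp - 1) / (bm * bp) →
      pm / am + pp / bp = 1 → pm / bm + pp / ap = 1) ∧
    (pm / am + pp / bp = 1 → pm / bm + pp / ap = 1 →
      (am + ap - 1) / (am * ap) = (bm + bp - 1) / (bm * bp)) := by
  have ham : am ≠ 0 := ne_of_gt h1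
  have hap : ap ≠ 0 := ne_of_gt h4
  have hbm : bm ≠ 0 := by positivity
  have hbp : bp ≠ 0 := by positivity
  have hba : bp - am ≠ 0 := by intro h; nlinarith
  constructor
  · intro h hx
    field_simp at h hx ⊢
    refine mul_left_cancel₀ hba ?_
    linear_combination -h - (bm - ap) * hx + ((bm - ap) * bp + (bp - am) * ap) * hsum
  · intro hx hy
    field_simp at hx hy ⊢
    linear_combination (-(bm - ap)) * hx - (bp - am) * hy + ((bm - ap) * bp + (bp - am) * ap) * hsum
end

section
/- Let ρ ∈ (0,1) and k > l ≥ 1 with ρ^{k+l} - 2ρ^l + 1 > 0. For the similarity φ_k(x) = ρ - ρ^k x and the interval I = [ρ(1 - ρ^l x_-), ρ x_-] with x_- = (1-ρ^k)/(1-ρ^{k+l}), one has φ_k(I) ⊆ I with sup φ_k(I) = sup I. -/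
/-!
With `x₋ = (1 - ρ^k) / (1 - ρ^(k+l))` one has `1 - ρ^k (1 - ρ^l x₋) = x₋`, so the decreasing
map `φ_k` sends the left endpoint `ρ (1 - ρ^l x₋)` of `I` to its right endpoint `ρ x₋`. Since
`φ_k` is antitone, `φ_k(I)` is the interval from `φ_k(ρ x₋)` to `φ_k(ρ (1 - ρ^l x₋)) = ρ x₋`,
and `φ_k(ρ x₋) = ρ (1 - ρ^k x₋)` lies above the left endpoint because `ρ^k ≤ ρ^l`.
-/

open Set Function

theorem isFixedPt_one_sub_mul_one_sub_mul {K : Type*} [Field K] {p q : K} (h : p * q ≠ 1) :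
    IsFixedPt (fun x => 1 - p * (1 - q * x)) ((1 - p) / (1 - p * q)) := by
  have : 1 - p * q ≠ 0 := sub_ne_zero.mpr (Ne.symm h)
  change 1 - p * (1 - q * ((1 - p) / (1 - p * q))) = (1 - p) / (1 - p * q)
  field_simp
  ring

theorem one_le_div_one_sub_mul_mul_one_add {K : Type*} [Field K] [LinearOrder K]
    [IsStrictOrderedRing K] {p q : K} (hpq : p ≤ q) (h : p * q < 1) :
    1 ≤ (1 - p) / (1 - p * q) * (1 + q) := by
  rw [div_mul_eq_mul_div, le_div_iff₀ (sub_pos.mpr h)]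
  linarith

theorem stmt11_general (ρ : ℝ) (k l : ℕ) (hρ : ρ ∈ Set.Ioo (0 : ℝ) 1) (hlk : l < k)
    (xm : ℝ) (hxm : xm = (1 - ρ ^ k) / (1 - ρ ^ (k + l)))
    (I : Set ℝ) (hI : I = Set.Icc (ρ * (1 - ρ ^ l * xm)) (ρ * xm))
    (φk : ℝ → ℝ) (hφk : ∀ x, φk x = ρ - ρ ^ k * x) :
    φk '' I ⊆ I ∧ sSup (φk '' I) = sSup I := by
  obtain ⟨hρ0, hρ1⟩ := hρ
  have hkl : ρ ^ k ≤ ρ ^ l := pow_le_pow_of_le_one hρ0.le hρ1.le hlk.le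
  have hk : ρ ^ k < 1 := pow_lt_one₀ hρ0.le hρ1 (by omega)
  have hprod : ρ ^ k * ρ ^ l < 1 :=
    mul_lt_one_of_nonneg_of_lt_one_left (by positivity) hk (pow_le_one₀ hρ0.le hρ1.le)
  rw [pow_add] at hxm
  have hxm0 : 0 ≤ xm := hxm ▸ div_nonneg (by linarith) (by linarith)
  have hanti : Antitone φk := fun x y hxy => by
    simpa only [hφk] using sub_le_sub_left (mul_le_mul_of_nonneg_left hxy (by positivity)) ρ
  have hfix : φk (ρ * (1 - ρ ^ l * xm)) = ρ * xm := by
    have hx : 1 - ρ ^ k * (1 - ρ ^ l * xm) = xm :=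
      hxm ▸ isFixedPt_one_sub_mul_one_sub_mul hprod.ne
    rw [hφk]
    linear_combination ρ * hx
  have hab : ρ * (1 - ρ ^ l * xm) ≤ ρ * xm := by
    have hx : 1 ≤ xm * (1 + ρ ^ l) := hxm ▸ one_le_div_one_sub_mul_mul_one_add hkl hprod
    exact mul_le_mul_of_nonneg_left (by linarith) hρ0.le
  have hleft : ρ * (1 - ρ ^ l * xm) ≤ φk (ρ * xm) := by
    rw [hφk]
    nlinarith [mul_le_mul_of_nonneg_right hkl (mul_nonneg hρ0.le hxm0)]
  subst hI
  refine ⟨hanti.image_Icc_subset.trans (Icc_subset_Icc hleft hfix.le), ?_⟩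
  rw [(hanti.antitoneOn _).sSup_image_Icc hab, csSup_Icc hab, hfix]

theorem stmt11 (ρ : ℝ) (k l : ℕ) (hρ : ρ ∈ Set.Ioo (0 : ℝ) 1) (hl : 1 ≤ l) (hlk : l < k)
    (hcond : ρ ^ (k + l) - 2 * ρ ^ l + 1 > 0)
    (xm : ℝ) (hxm : xm = (1 - ρ ^ k) / (1 - ρ ^ (k + l)))
    (I : Set ℝ) (hI : I = Set.Icc (ρ * (1 - ρ ^ l * xm)) (ρ * xm))
    (φk : ℝ → ℝ) (hφk : ∀ x, φk x = ρ - ρ ^ k * x) :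
    φk '' I ⊆ I ∧ sSup (φk '' I) = sSup I :=
  stmt11_general ρ k l hρ hlk xm hxm I hI φk hφk
end

section
/- Let 1 < l < k be integers and ρ ∈ (0,1) with ρ^{lt} - 2ρ^t + 1 > 0 for a real t > 0. Then the infinite sum ρ^{kt} + (Σ_{r=l}^{k-1} ρ^{rt}) · Σ_{n=0}^∞ (Σ_{s=1}^{l-1} ρ^{st})^n converges and equals (ρ^{lt} - 2ρ^{(k+1)t} + ρ^{(k+l)t})/(1 - 2ρ^t + ρ^{lt}). -/
/-! Writing `x = ρ ^ t`, every term is a power of `x`. The inner sum `S = x + ⋯ + x ^ (l - 1)`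
satisfies `(1 - S) (1 - x) = 1 - 2x + x ^ l`, so the hypothesis says exactly that `S < 1`: the
geometric series in `S` converges to `(1 - S)⁻¹ = (1 - x) / (1 - 2x + x ^ l)`, and multiplying
out `(x ^ l + ⋯ + x ^ (k - 1)) (1 - x) = x ^ l - x ^ k` gives the closed form. -/

open Finset

lemma one_sub_geom_sum_Ico_one_mul_one_sub {R : Type*} [CommRing R] (x : R) {l : ℕ}
    (hl : 1 ≤ l) :
    (1 - ∑ s ∈ Ico 1 l, x ^ s) * (1 - x) = 1 - 2 * x + x ^ l := by
  linear_combination -geom_sum_Ico_mul_neg x hl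

lemma geom_sum_Ico_one_lt_one {K : Type*} [Field K] [LinearOrder K] [IsStrictOrderedRing K]
    {x : K} {l : ℕ} (hl : 1 ≤ l) (hx : x < 1) (hD : 0 < 1 - 2 * x + x ^ l) :
    ∑ s ∈ Ico 1 l, x ^ s < 1 := by
  rw [← one_sub_geom_sum_Ico_one_mul_one_sub x hl] at hD
  exact sub_pos.1 (pos_of_mul_pos_left hD (sub_pos.2 hx).le)

lemma pow_add_geom_sum_Ico_mul_inv_one_sub_geom_sum {K : Type*} [Field K] (x : K) {k l : ℕ}
    (hl : 1 ≤ l) (hlk : l ≤ k) (hD : 1 - 2 * x + x ^ l ≠ 0) :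
    x ^ k + (∑ r ∈ Ico l k, x ^ r) * (1 - ∑ s ∈ Ico 1 l, x ^ s)⁻¹
      = (x ^ l - 2 * x ^ (k + 1) + x ^ (k + l)) / (1 - 2 * x + x ^ l) := by
  have hS := one_sub_geom_sum_Ico_one_mul_one_sub x hl
  have hM := geom_sum_Ico_mul_neg x hlk
  have h1x : 1 - x ≠ 0 := right_ne_zero_of_mul (hS ▸ hD)
  calc x ^ k + (∑ r ∈ Ico l k, x ^ r) * (1 - ∑ s ∈ Ico 1 l, x ^ s)⁻¹
      = x ^ k + (∑ r ∈ Ico l k, x ^ r) * (1 - x) / (1 - 2 * x + x ^ l) := by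
        rw [← hS, mul_div_mul_right _ _ h1x, div_eq_mul_inv]
    _ = (x ^ l - 2 * x ^ (k + 1) + x ^ (k + l)) / (1 - 2 * x + x ^ l) := by
        rw [hM]; field_simp; ring

theorem stmt13 (ρ t : ℝ) (k l : ℕ) (hl : 1 < l) (hlk : l < k)
    (hρ : ρ ∈ Set.Ioo (0 : ℝ) 1) (ht : 0 < t)
    (hcond : ρ ^ ((l : ℝ) * t) - 2 * ρ ^ t + 1 > 0) :
    Summable (fun n : ℕ => (∑ s ∈ Finset.Ico 1 l, ρ ^ ((s : ℝ) * t)) ^ n) ∧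
    ρ ^ ((k : ℝ) * t) + (∑ r ∈ Finset.Ico l k, ρ ^ ((r : ℝ) * t)) *
        ∑' n : ℕ, (∑ s ∈ Finset.Ico 1 l, ρ ^ ((s : ℝ) * t)) ^ n
      = (ρ ^ ((l : ℝ) * t) - 2 * ρ ^ (((k : ℝ) + 1) * t) + ρ ^ (((k : ℝ) + (l : ℝ)) * t)) /
          (1 - 2 * ρ ^ t + ρ ^ ((l : ℝ) * t)) := by
  obtain ⟨hρ0, hρ1⟩ := hρ
  set x := ρ ^ t
  have hpow (n : ℕ) : ρ ^ ((n : ℝ) * t) = x ^ n := by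
    rw [mul_comm, Real.rpow_mul_natCast hρ0.le]
  rw [← Nat.cast_add_one, ← Nat.cast_add] at *
  simp only [hpow] at hcond ⊢
  have hD : 0 < 1 - 2 * x + x ^ l := by linarith
  have hS0 : 0 ≤ ∑ s ∈ Ico 1 l, x ^ s := sum_nonneg fun s _ => by positivity
  have hS1 := geom_sum_Ico_one_lt_one hl.le (Real.rpow_lt_one hρ0.le hρ1 ht) hD
  refine ⟨summable_geometric_of_lt_one hS0 hS1, ?_⟩
  rw [tsum_geometric_of_lt_one hS0 hS1]
  exact pow_add_geom_sum_Ico_mul_inv_one_sub_geom_sum x hl.le hlk.le hD.ne'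
end

section
/- Let K ⊂ ℝ be a compact set of box dimension d, let A = {ρ^j : j ≥ 0} for ρ ∈ (0,1), and let ψ : A × K → ℝ be given by ψ(ρ^j, x) = ρ^j x. If K ⊂ [c, C] with 0 < c, then the box dimension of ψ(A × K) = ⋃_{j≥0} ρ^j K is at most d. -/
/-!
Let `U = ⋃ j, ρ ^ j • K`. At scale `ε`, the copies `ρ ^ j • K` with `ρ ^ j * sup |K| < ε` all lie
in the single ball `ball 0 ε`, and each of the remaining `m ≈ log_{1/ρ} (1 / ε)` copies is covered
by the image of an optimal `ε`-cover of `K`, since scaling by `ρ ^ j ≤ 1` does not increase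
distances. Hence `N_U(ε) ≤ (m + 1) N_K(ε)`, and `log (m + 1) = o(log (1 / ε))` disappears in the
`limsup`.
-/

/-- The covering number of a set `s ⊆ ℝ` by balls of radius `ε`. -/
noncomputable def coverNum (s : Set ℝ) (ε : ℝ) : ℕ∞ :=
  ⨅ (t : Finset ℝ) (_ : s ⊆ ⋃ x ∈ t, Metric.ball x ε), (t.card : ℕ∞)

/-- The upper box (Minkowski) dimension of a set `s ⊆ ℝ`. -/
noncomputable def upperBoxDim (s : Set ℝ) : ℝ :=
  Filter.limsup
    (fun n : ℕ => Real.log ((coverNum s (1 / (n + 1 : ℝ))).toNat : ℝ) /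
      Real.log ((n : ℝ) + 1)) Filter.atTop

open Filter Real Metric Set Asymptotics Bornology

section Covering

variable {s : Set ℝ} {ε : ℝ}

lemma coverNum_le_card {t : Finset ℝ} (h : s ⊆ ⋃ x ∈ t, ball x ε) : coverNum s ε ≤ t.card :=
  iInf₂_le t h

lemma coverNum_mono {s' : Set ℝ} (h : s ⊆ s') : coverNum s ε ≤ coverNum s' ε :=
  le_iInf₂ fun _ ht => coverNum_le_card (h.trans ht)

lemma exists_card_eq_coverNum (h : coverNum s ε ≠ ⊤) :
    ∃ t : Finset ℝ, s ⊆ ⋃ x ∈ t, ball x ε ∧ (t.card : ℕ∞) = coverNum s ε := by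
  rw [coverNum, iInf_subtype'] at h ⊢
  have : Nonempty {t : Finset ℝ // s ⊆ ⋃ x ∈ t, ball x ε} := by
    by_contra! he
    exact h (iInf_of_empty _)
  obtain ⟨⟨t, ht⟩, heq⟩ :=
    ciInf_mem fun t : {t : Finset ℝ // s ⊆ ⋃ x ∈ t, ball x ε} => (t.1.card : ℕ∞)
  exact ⟨t, ht, heq⟩

lemma one_le_coverNum (hs : s.Nonempty) : 1 ≤ coverNum s ε := by
  refine le_iInf₂ fun t ht => ?_
  obtain ⟨x, hx⟩ := hs
  obtain ⟨y, hy, -⟩ := mem_iUnion₂.1 (ht hx)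
  exact_mod_cast Finset.card_pos.2 ⟨y, hy⟩

lemma coverNum_Icc_le (a b : ℝ) (hε : 0 < ε) :
    coverNum (Icc a b) ε ≤ (⌊(b - a) / ε⌋₊ + 1 : ℕ) := by
  classical
  let t := (Finset.range (⌊(b - a) / ε⌋₊ + 1)).image fun k : ℕ => a + ε * k
  have hcov : Icc a b ⊆ ⋃ x ∈ t, ball x ε := by
    rintro x ⟨hax, hxb⟩
    have hq : 0 ≤ (x - a) / ε := div_nonneg (by linarith) hε.le
    refine mem_iUnion₂.2 ⟨a + ε * ⌊(x - a) / ε⌋₊, Finset.mem_image_of_mem _ ?_, ?_⟩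
    · exact Finset.mem_range_succ_iff.2 (Nat.floor_le_floor (by gcongr))
    · have hlo := (le_div_iff₀' hε).1 (Nat.floor_le hq)
      have hhi := (div_lt_iff₀' hε).1 (Nat.lt_floor_add_one ((x - a) / ε))
      rw [mem_ball, Real.dist_eq, abs_lt]
      constructor <;> nlinarith
  calc coverNum (Icc a b) ε ≤ t.card := coverNum_le_card hcov
    _ ≤ (⌊(b - a) / ε⌋₊ + 1 : ℕ) := by exact_mod_cast Finset.card_image_le.trans (by simp)

lemma Bornology.IsBounded.coverNum_ne_top (hs : IsBounded s) (hε : 0 < ε) :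
    coverNum s ε ≠ ⊤ := by
  obtain ⟨R, -, hR⟩ := hs.exists_pos_norm_le
  have hsub : s ⊆ Icc (-R) R := fun x hx => abs_le.1 (hR x hx)
  exact ne_top_of_le_ne_top (ENat.natCast_ne_top _)
    ((coverNum_mono hsub).trans (coverNum_Icc_le (-R) R hε))

end Covering

lemma coverNum_iUnion_pow_mul_image_le {K : Set ℝ} {ρ R ε : ℝ} {m : ℕ} {t : Finset ℝ}
    (hρ0 : 0 ≤ ρ) (hρ1 : ρ ≤ 1) (hR : ∀ x ∈ K, |x| ≤ R) (hm : ρ ^ m * R < ε)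
    (ht : K ⊆ ⋃ z ∈ t, ball z ε) :
    coverNum (⋃ j : ℕ, (fun x => ρ ^ j * x) '' K) ε ≤ m * t.card + 1 := by
  classical
  let T := insert 0 ((Finset.range m).biUnion fun j => t.image (ρ ^ j * ·))
  have hcov : (⋃ j : ℕ, (fun x => ρ ^ j * x) '' K) ⊆ ⋃ z ∈ T, ball z ε := by
    simp only [iUnion_subset_iff, image_subset_iff]
    intro j x hx
    rcases lt_or_ge j m with hj | hj
    · obtain ⟨z, hz, hxz⟩ := mem_iUnion₂.1 (ht hx)
      refine mem_iUnion₂.2 ⟨ρ ^ j * z, Finset.mem_insert_of_mem (Finset.mem_biUnion.2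
        ⟨j, Finset.mem_range.2 hj, Finset.mem_image_of_mem _ hz⟩), ?_⟩
      rw [mem_ball, dist_eq] at hxz ⊢
      rw [← mul_sub, abs_mul, abs_of_nonneg (pow_nonneg hρ0 j)]
      exact (mul_le_of_le_one_left (abs_nonneg _) (pow_le_one₀ hρ0 hρ1)).trans_lt hxz
    · refine mem_iUnion₂.2 ⟨0, Finset.mem_insert_self _ _, ?_⟩
      rw [mem_ball, dist_zero_right, norm_mul, norm_pow, Real.norm_eq_abs, abs_of_nonneg hρ0]
      calc ρ ^ j * |x| ≤ ρ ^ m * R :=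
            mul_le_mul (pow_le_pow_of_le_one hρ0 hρ1 hj) (hR x hx) (abs_nonneg x)
              (pow_nonneg hρ0 m)
        _ < ε := hm
  have hcard : T.card ≤ m * t.card + 1 := by
    refine (Finset.card_insert_le _ _).trans (Nat.succ_le_succ ?_)
    simpa using Finset.card_biUnion_le_card_mul (Finset.range m) _ t.card
      fun j _ => Finset.card_image_le
  exact (coverNum_le_card hcov).trans (by exact_mod_cast hcard)

lemma coverNum_iUnion_pow_mul_image_le_mul {K : Set ℝ} {ρ R ε : ℝ} {m : ℕ}
    (hρ0 : 0 ≤ ρ) (hρ1 : ρ ≤ 1) (hR : ∀ x ∈ K, |x| ≤ R) (hm : ρ ^ m * R < ε)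
    (hK : K.Nonempty) :
    coverNum (⋃ j : ℕ, (fun x => ρ ^ j * x) '' K) ε ≤ ((m + 1 : ℕ) : ℕ∞) * coverNum K ε := by
  by_cases htop : coverNum K ε = ⊤
  · simp [htop, ENat.mul_top]
  obtain ⟨t, ht, hcard⟩ := exists_card_eq_coverNum htop
  obtain ⟨x, hx⟩ := hK
  obtain ⟨z, hz, -⟩ := mem_iUnion₂.1 (ht hx)
  have ht1 : 1 ≤ t.card := Finset.card_pos.2 ⟨z, hz⟩
  rw [← hcard]
  refine (coverNum_iUnion_pow_mul_image_le hρ0 hρ1 hR hm ht).trans ?_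
  exact_mod_cast (by nlinarith : m * t.card + 1 ≤ (m + 1) * t.card)

lemma Nat.floor_le_abs {α : Type*} [Ring α] [LinearOrder α] [IsStrictOrderedRing α]
    [FloorSemiring α] (x : α) : (⌊x⌋₊ : α) ≤ |x| := by
  rcases le_total 0 x with hx | hx
  · exact (Nat.floor_le hx).trans (le_abs_self x)
  · simp [Nat.floor_of_nonpos hx]

lemma Real.log_natCast_le_log_add_log_of_le_mul {a k b : ℕ} (hk : k ≠ 0) (hb : b ≠ 0)
    (h : a ≤ k * b) : log a ≤ log k + log b := by
  rcases Nat.eq_zero_or_pos a with rfl | ha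
  · simpa using add_nonneg (log_natCast_nonneg k) (log_natCast_nonneg b)
  rw [← log_mul (by positivity) (by positivity)]
  exact log_le_log (by positivity) (by exact_mod_cast h)

lemma pow_mul_lt_of_logb_inv_lt {ρ R ε : ℝ} {m : ℕ} (hρ0 : 0 < ρ) (hρ1 : ρ < 1) (hR : 0 < R)
    (hε : 0 < ε) (hm : logb ρ⁻¹ (R / ε) < m) : ρ ^ m * R < ε := by
  rw [logb_lt_iff_lt_rpow (one_lt_inv₀ hρ0 |>.2 hρ1) (by positivity), rpow_natCast, inv_pow,
    div_lt_iff₀ hε] at hm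
  rwa [← lt_inv_mul_iff₀ (by positivity)]

lemma eventually_abs_logb_add_two_le_rpow (b : ℝ) {R δ : ℝ} (hR : 0 < R) (hδ : 0 < δ) :
    ∀ᶠ x : ℝ in atTop, |logb b (R * x)| + 2 ≤ x ^ δ := by
  have hgrow : Tendsto (fun x : ℝ => ‖x ^ δ‖) atTop atTop :=
    tendsto_norm_atTop_atTop.comp (tendsto_rpow_atTop hδ)
  have hconst (c : ℝ) : (fun _ : ℝ => c) =o[atTop] (· ^ δ) :=
    isLittleO_const_left.2 (Or.inr hgrow)
  have hlog : (fun x => log (R * x)) =o[atTop] (· ^ δ) := by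
    refine ((hconst (log R)).add (isLittleO_log_rpow_atTop hδ)).congr' ?_ EventuallyEq.rfl
    filter_upwards [eventually_gt_atTop 0] with x hx
    rw [log_mul hR.ne' hx.ne']
  have hlogb : (fun x => logb b (R * x)) =o[atTop] (· ^ δ) :=
    (hlog.const_mul_left (log b)⁻¹).congr_left fun x => by rw [logb, inv_mul_eq_div]
  filter_upwards [(hlogb.norm_left.add (hconst 2)).bound one_pos,
    eventually_ge_atTop 0] with x hx hx0
  rw [one_mul, Real.norm_of_nonneg (rpow_nonneg hx0 δ)] at hx
  exact (le_abs_self _).trans hx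

noncomputable def boxDimSeq (s : Set ℝ) (n : ℕ) : ℝ :=
  log (coverNum s (1 / (n + 1 : ℝ))).toNat / log ((n : ℝ) + 1)

lemma upperBoxDim_eq_limsup_boxDimSeq (s : Set ℝ) :
    upperBoxDim s = limsup (boxDimSeq s) atTop := rfl

lemma boxDimSeq_nonneg (s : Set ℝ) (n : ℕ) : 0 ≤ boxDimSeq s n :=
  div_nonneg (log_natCast_nonneg _) (log_nonneg (by simp))

lemma Bornology.IsBounded.isBoundedUnder_boxDimSeq {s : Set ℝ} (hs : IsBounded s) :
    IsBoundedUnder (· ≤ ·) atTop (boxDimSeq s) := by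
  obtain ⟨R, hR0, hR⟩ := hs.exists_pos_norm_le
  refine ⟨2, eventually_map.2 ?_⟩
  filter_upwards [eventually_ge_atTop ⌈2 * R⌉₊, eventually_gt_atTop 0] with n hn hn0
  have hx : (0 : ℝ) < n + 1 := by positivity
  have hsub : s ⊆ Icc (-R) R := fun x hx => abs_le.1 (hR x hx)
  have hcover : coverNum s (1 / (n + 1 : ℝ)) ≤ (⌊2 * R * (n + 1)⌋₊ + 1 : ℕ) := by
    have := coverNum_Icc_le (-R) R (one_div_pos.2 hx)
    rw [sub_neg_eq_add, ← two_mul, div_div_eq_mul_div, div_one] at this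
    exact (coverNum_mono hsub).trans this
  have hN : ((coverNum s (1 / (n + 1 : ℝ))).toNat : ℝ) ≤ (n + 1) ^ 2 := by
    have h1 : (coverNum s (1 / (n + 1 : ℝ))).toNat ≤ ⌊2 * R * (n + 1)⌋₊ + 1 := by
      simpa only [ENat.toNat_natCast] using ENat.toNat_le_toNat hcover (ENat.natCast_ne_top _)
    have h2 : (⌊2 * R * (n + 1)⌋₊ : ℝ) ≤ 2 * R * (n + 1) := Nat.floor_le (by positivity)
    have h3 : 2 * R ≤ n := Nat.ceil_le.1 hn
    have h4 : (1 : ℝ) ≤ n := by exact_mod_cast hn0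
    calc _ ≤ (⌊2 * R * (n + 1)⌋₊ : ℝ) + 1 := by exact_mod_cast h1
      _ ≤ (n + 1) ^ 2 := by nlinarith
  rcases Nat.eq_zero_or_pos (coverNum s (1 / (n + 1 : ℝ))).toNat with h0 | hpos
  · rw [boxDimSeq, h0]
    simp
  rw [boxDimSeq, div_le_iff₀ (log_pos (by simpa using hn0))]
  calc _ ≤ log (((n : ℝ) + 1) ^ 2) := log_le_log (by exact_mod_cast hpos) hN
    _ = 2 * log ((n : ℝ) + 1) := by rw [log_pow]; norm_num

lemma upperBoxDim_le_of_eventually_le_add {s t : Set ℝ}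
    (ht : IsBoundedUnder (· ≤ ·) atTop (boxDimSeq t))
    (h : ∀ δ > 0, ∀ᶠ n in atTop, boxDimSeq s n ≤ boxDimSeq t n + δ) :
    upperBoxDim s ≤ upperBoxDim t := by
  refine le_of_forall_pos_le_add fun δ hδ => ?_
  rw [upperBoxDim_eq_limsup_boxDimSeq, upperBoxDim_eq_limsup_boxDimSeq,
    ← limsup_add_const _ _ _ ht (isCoboundedUnder_le_of_le atTop (boxDimSeq_nonneg t))]
  exact limsup_le_limsup (h δ hδ) (isCoboundedUnder_le_of_le atTop (boxDimSeq_nonneg s))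
    (isBoundedUnder_le_add ht isBoundedUnder_const)

lemma eventually_boxDimSeq_iUnion_pow_mul_image_le {K : Set ℝ} {ρ δ : ℝ} (hb : IsBounded K)
    (hK : K.Nonempty) (hρ0 : 0 < ρ) (hρ1 : ρ < 1) (hδ : 0 < δ) :
    ∀ᶠ n : ℕ in atTop,
      boxDimSeq (⋃ j : ℕ, (fun x => ρ ^ j * x) '' K) n ≤ boxDimSeq K n + δ := by
  obtain ⟨R, hR0, hR⟩ := hb.exists_pos_norm_le
  -- for `j ≥ m n`, the copy `ρ ^ j • K` lies inside `ball 0 (1 / (n + 1))`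
  let m : ℕ → ℕ := fun n => ⌊logb ρ⁻¹ (R * (n + 1))⌋₊ + 1
  have hm_le : ∀ᶠ n : ℕ in atTop, ((m n + 1 : ℕ) : ℝ) ≤ ((n : ℝ) + 1) ^ δ := by
    filter_upwards [(tendsto_atTop_add_const_right _ 1 tendsto_natCast_atTop_atTop).eventually
      (eventually_abs_logb_add_two_le_rpow ρ⁻¹ hR0 hδ)] with n hn
    have := Nat.floor_le_abs (logb ρ⁻¹ (R * (n + 1)))
    push_cast [m]
    linarith
  filter_upwards [hm_le, eventually_gt_atTop 0] with n hmn hn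
  have hε : (0 : ℝ) < 1 / (n + 1) := by positivity
  have hm : ρ ^ m n * R < 1 / (n + 1) :=
    pow_mul_lt_of_logb_inv_lt hρ0 hρ1 hR0 hε (by simpa [m] using Nat.lt_floor_add_one _)
  have hcount := ENat.toNat_le_toNat
    (coverNum_iUnion_pow_mul_image_le_mul hρ0.le hρ1.le hR hm hK)
    (WithTop.mul_ne_top (ENat.natCast_ne_top _) (hb.coverNum_ne_top hε))
  rw [ENat.toNat_mul, ENat.toNat_natCast] at hcount
  have hNK : (coverNum K (1 / (n + 1 : ℝ))).toNat ≠ 0 := by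
    rw [Ne, ENat.toNat_eq_zero, not_or]
    exact ⟨Order.one_le_iff_ne_zero.1 (one_le_coverNum hK), hb.coverNum_ne_top hε⟩
  have hlog := log_natCast_le_log_add_log_of_le_mul (m n).succ_ne_zero hNK hcount
  have hlogm : log ((m n + 1 : ℕ) : ℝ) ≤ δ * log ((n : ℝ) + 1) := by
    rw [← log_rpow (by positivity)]
    exact log_le_log (by positivity) hmn
  have hpos : 0 < log ((n : ℝ) + 1) := log_pos (by simpa using hn)
  rw [boxDimSeq, boxDimSeq, div_add' _ _ _ hpos.ne', div_le_div_iff_of_pos_right hpos]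
  linarith

theorem upperBoxDim_iUnion_pow_mul_image_le {K : Set ℝ} {ρ : ℝ} (hb : IsBounded K)
    (hρ0 : 0 < ρ) (hρ1 : ρ < 1) :
    upperBoxDim (⋃ j : ℕ, (fun x => ρ ^ j * x) '' K) ≤ upperBoxDim K := by
  rcases K.eq_empty_or_nonempty with rfl | hK
  · simp
  exact upperBoxDim_le_of_eventually_le_add hb.isBoundedUnder_boxDimSeq fun δ hδ =>
    eventually_boxDimSeq_iUnion_pow_mul_image_le hb hK hρ0 hρ1 hδ

theorem stmt18_general (K : Set ℝ) (ρ c C d : ℝ)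
    (hKsub : K ⊆ Set.Icc c C) (hρ : ρ ∈ Set.Ioo (0 : ℝ) 1)
    (hdim : upperBoxDim K = d) :
    upperBoxDim (⋃ j : ℕ, (fun x => ρ ^ j * x) '' K) ≤ d :=
  hdim ▸ upperBoxDim_iUnion_pow_mul_image_le ((isBounded_Icc c C).subset hKsub) hρ.1 hρ.2

theorem stmt18 (K : Set ℝ) (ρ c C d : ℝ) (hK : IsCompact K)
    (hKsub : K ⊆ Set.Icc c C) (hc : 0 < c) (hρ : ρ ∈ Set.Ioo (0 : ℝ) 1)
    (hdim : upperBoxDim K = d) :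
    upperBoxDim (⋃ j : ℕ, (fun x => ρ ^ j * x) '' K) ≤ d :=
  stmt18_general K ρ c C d hKsub hρ hdim
end
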